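/- arXiv:2202.01158 — 2 statements merged into one kernel-verified Lean document; each statement's English description precedes it below -/
import Mathlib

section
/- Let V be a finite set partitioned into pairwise disjoint nonempty subsets V_1, …, V_T, let f : Finset V → ℝ be a monotone (A ⊆ B ⇒ f(A) ≤ f(B)) submodular set function with f(∅) = 0, and let α ∈ (0, 1]. Suppose a greedy procedure builds sets ∅ = G_0 ⊆ G_1 ⊆ ⋯ ⊆ G_T by choosing, at each step t, an element g_t ∈ V_t with G_t = G_{t−1} ∪ {g_t} such that f(G_t) − f(G_{t−1}) ≥ α · (f(G_{t−1} ∪ {v}) − f(G_{t−1})) for every v ∈ V_t. Then for every set S ⊆ V with |S ∩ V_t| ≤ 1 for all t, one has f(G_T) ≥ (α/(α+1)) · f(S); i.e., the greedy schedule is α/(α+1)-competitive against any feasible schedule. -/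
/-- Competitive ratio of the temporally greedy schedule: if the per-time-slot choice is an
`α`-approximation of the best marginal gain, then the greedy schedule attains at least an
`α/(α+1)` fraction of the value of any feasible schedule (at most one element per part). -/
theorem stmt_5 {V : Type*} [Fintype V] [DecidableEq V] (T : ℕ)
    (parts : Fin T → Finset V)
    (hne : ∀ t, (parts t).Nonempty)
    (hdisj : ∀ t t', t ≠ t' → Disjoint (parts t) (parts t'))
    (hcover : ∀ v : V, ∃ t, v ∈ parts t)
    (f : Finset V → ℝ)
    (hmono : ∀ A B : Finset V, A ⊆ B → f A ≤ f B)
    (hsub : ∀ B A A' : Finset V, A' ⊆ A → f (A ∪ B) - f A ≤ f (A' ∪ B) - f A')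
    (hf0 : f ∅ = 0)
    (α : ℝ) (hα0 : 0 < α) (hα1 : α ≤ 1)
    (G : ℕ → Finset V) (g : Fin T → V)
    (hG0 : G 0 = ∅)
    (hg : ∀ t : Fin T, g t ∈ parts t)
    (hGsucc : ∀ t : Fin T, G ((t : ℕ) + 1) = insert (g t) (G (t : ℕ)))
    (hgreedy : ∀ t : Fin T, ∀ v ∈ parts t,
      f (G ((t : ℕ) + 1)) - f (G (t : ℕ)) ≥ α * (f (insert v (G (t : ℕ))) - f (G (t : ℕ)))) :
    ∀ S : Finset V, (∀ t : Fin T, (S ∩ parts t).card ≤ 1) →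
      f (G T) ≥ (α / (α + 1)) * f S := by
  intro S hS
  classical
  set St : ℕ → Finset V :=
    fun n => S.filter (fun v => ∃ i : Fin T, (i : ℕ) < n ∧ v ∈ parts i) with hStdef
  have hmarg : ∀ (n : ℕ) (x : V) (A : Finset V), G n ⊆ A →
      f (insert x A) - f A ≤ f (insert x (G n)) - f (G n) := by
    intro n x A hA
    have h := hsub {x} A (G n) hA
    rw [Finset.union_comm A, ← Finset.insert_eq, Finset.union_comm (G n), ← Finset.insert_eq] at h
    exact h
  have key : ∀ n, n ≤ T → f (St n ∪ G n) ≤ f (G n) + (1/α) * (f (G n) - f (G 0)) := by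
    intro n
    induction n with
    | zero =>
      intro _
      simp [hStdef]
    | succ n ih =>
      intro hn
      have hnT : n < T := hn
      have ih := ih (le_of_lt hnT)
      set t : Fin T := ⟨n, hnT⟩ with htdef
      have hGn : G (n + 1) = insert (g t) (G n) := hGsucc t
      have hΔ : 0 ≤ f (G (n+1)) - f (G n) := by
        have : G n ⊆ G (n+1) := by rw [hGn]; exact Finset.subset_insert _ _
        linarith [hmono _ _ this]
      have hsplit : St (n+1) = St n ∪ (S ∩ parts t) := by
        ext v
        simp only [hStdef, Finset.mem_filter, Finset.mem_union, Finset.mem_inter]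
        constructor
        · rintro ⟨hv, i, hi, hvi⟩
          rcases Nat.lt_succ_iff_lt_or_eq.mp hi with h | h
          · exact Or.inl ⟨hv, i, h, hvi⟩
          · right
            refine ⟨hv, ?_⟩
            have : i = t := Fin.ext h
            rwa [this] at hvi
        · rintro (⟨hv, i, hi, hvi⟩ | ⟨hv, hvt⟩)
          · exact ⟨hv, i, Nat.lt_succ_of_lt hi, hvi⟩
          · exact ⟨hv, t, Nat.lt_succ_self n, hvt⟩
      have h4 : f (insert (g t) (St n ∪ G n)) - f (St n ∪ G n) ≤ f (G (n+1)) - f (G n) := by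
        have h := hmarg n (g t) (St n ∪ G n) Finset.subset_union_right
        rw [← hGn] at h
        exact h
      have hring : (1/α) * (f (G (n+1)) - f (G 0)) =
          (1/α) * (f (G n) - f (G 0)) + (1/α) * (f (G (n+1)) - f (G n)) := by ring
      have hα' : (0:ℝ) ≤ 1/α := by positivity
      have hΔα : 0 ≤ (1/α) * (f (G (n+1)) - f (G n)) := mul_nonneg hα' hΔ
      by_cases hSE : S ∩ parts t = ∅
      · have hset : St (n+1) ∪ G (n+1) = insert (g t) (St n ∪ G n) := by
          rw [hsplit, hSE, hGn, Finset.union_empty, Finset.union_insert]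
        rw [hset]
        linarith
      · obtain ⟨s, hs⟩ : ∃ s, S ∩ parts t = {s} :=
          Finset.card_eq_one.mp (le_antisymm (hS t)
            (Finset.card_pos.mpr (Finset.nonempty_iff_ne_empty.mpr hSE)))
        have hst : s ∈ parts t := by
          have : s ∈ S ∩ parts t := by rw [hs]; exact Finset.mem_singleton_self s
          exact (Finset.mem_inter.mp this).2
        have hset : St (n+1) ∪ G (n+1) = insert s (insert (g t) (St n ∪ G n)) := by
          rw [hsplit, hs, hGn]
          ext v
          simp only [Finset.mem_union, Finset.mem_insert, Finset.mem_singleton]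
          tauto
        have h2 : f (insert s (insert (g t) (St n ∪ G n))) - f (insert (g t) (St n ∪ G n)) ≤
            f (insert s (G n)) - f (G n) := by
          refine hmarg n s _ ?_
          exact Finset.subset_union_right.trans (Finset.subset_insert _ _)
        have h3 : f (insert s (G n)) - f (G n) ≤ (1/α) * (f (G (n+1)) - f (G n)) := by
          have h := hgreedy t s hst
          rw [ge_iff_le] at h
          rw [one_div, ← div_eq_inv_mul, le_div_iff₀ hα0]
          have hc : α * (f (insert s (G n)) - f (G n)) =
              (f (insert s (G n)) - f (G n)) * α := mul_comm _ _
          linarith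
        rw [hset]
        linarith
  have hfin : St T = S := by
    ext v
    simp only [hStdef, Finset.mem_filter]
    constructor
    · exact fun h => h.1
    · intro hv
      obtain ⟨i, hi⟩ := hcover v
      exact ⟨hv, i, i.isLt, hi⟩
  have hmain := key T le_rfl
  rw [hfin, hG0, hf0] at hmain
  have hSle : f S ≤ f (S ∪ G T) := hmono _ _ Finset.subset_union_left
  have h2 : α * f S ≤ α * f (G T) + f (G T) := by
    have hx : α * (f (G T) + 1 / α * (f (G T) - 0)) = α * f (G T) + f (G T) := by
      field_simp
      ring
    linarith [mul_le_mul_of_nonneg_left (hSle.trans hmain) hα0.le]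
  rw [ge_iff_le, div_mul_eq_mul_div, div_le_iff₀ (by linarith : (0:ℝ) < α + 1)]
  nlinarith
end

section
/- Let V be a finite set partitioned into pairwise disjoint nonempty subsets V_1, …, V_T, let f : Finset V → ℝ be a monotone submodular set function with f(∅) = 0, and let Γ ≥ 1 be a real number. Suppose a greedy procedure builds sets ∅ = G_0 ⊆ G_1 ⊆ ⋯ ⊆ G_T by choosing at each step t an element g_t ∈ V_t with G_t = G_{t−1} ∪ {g_t} such that f(G_t) − f(G_{t−1}) ≥ (1/(3Γ)) · (f(G_{t−1} ∪ {v}) − f(G_{t−1})) for every v ∈ V_t. Then for every set S ⊆ V with |S ∩ V_t| ≤ 1 for all t, one has f(G_T) ≥ (1/(3Γ+1)) · f(S). -/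
/-! Let `τ v` be the time slot of `v`. By submodularity and monotonicity,
`f S ≤ f (G_T) + ∑_{v ∈ S} (f (G_T ∪ {v}) - f G_T)`, and each marginal gain over `G_T` is at most
the gain over the earlier `G_{τ v}`, which the greedy rule bounds by `3Γ` times the gain of slot
`τ v`. Since `S` meets every slot at most once, `τ` is injective on `S`, so these slot gains sum to
at most `f (G_T) - f ∅`. Hence `f S ≤ (3Γ + 1) f (G_T)`. -/

open Finset

section

variable {V : Type*}

theorem sub_le_sum_insert_sub_of_submodular [DecidableEq V] {f : Finset V → ℝ}
    (hsub : ∀ B A A' : Finset V, A' ⊆ A → f (A ∪ B) - f A ≤ f (A' ∪ B) - f A')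
    (A S : Finset V) : f (A ∪ S) - f A ≤ ∑ v ∈ S, (f (insert v A) - f A) := by
  induction S using Finset.induction_on with
  | empty => simp
  | @insert a s ha ih =>
    have hmarg : f (A ∪ s ∪ {a}) - f (A ∪ s) ≤ f (A ∪ {a}) - f A :=
      hsub {a} (A ∪ s) A subset_union_left
    rw [union_singleton, union_singleton] at hmarg
    rw [sum_insert ha, union_insert]
    linarith

theorem subset_of_le_of_forall_lt_subset_succ {G : ℕ → Finset V} {T : ℕ}
    (hstep : ∀ n < T, G n ⊆ G (n + 1)) {m : ℕ} (hm : m ≤ T) : G m ⊆ G T := by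
  induction T, hm using Nat.le_induction with
  | base => rfl
  | succ n hmn ih =>
    exact (ih fun k hk ↦ hstep k (hk.trans n.lt_succ_self)).trans (hstep n n.lt_succ_self)

theorem injOn_of_card_inter_le_one [DecidableEq V] {ι : Type*} {parts : ι → Finset V} {τ : V → ι}
    (hτ : ∀ v, v ∈ parts (τ v)) {S : Finset V} (hS : ∀ i, #(S ∩ parts i) ≤ 1) :
    Set.InjOn τ S := by
  intro u hu v hv huv
  exact card_le_one.mp (hS (τ u)) u (mem_inter.mpr ⟨hu, hτ u⟩)
    v (mem_inter.mpr ⟨hv, huv ▸ hτ v⟩)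

/-- With `c = 1/α` and `f (G 0) = 0` this is the `α/(α+1)` guarantee of the temporally greedy
schedule (Theorem 1). -/
theorem le_add_mul_sub_of_greedy [DecidableEq V] {T : ℕ} (parts : Fin T → Finset V)
    {f : Finset V → ℝ}
    (hmono : ∀ A B : Finset V, A ⊆ B → f A ≤ f B)
    (hsub : ∀ B A A' : Finset V, A' ⊆ A → f (A ∪ B) - f A ≤ f (A' ∪ B) - f A')
    {G : ℕ → Finset V} (hstep : ∀ n < T, G n ⊆ G (n + 1)) {c : ℝ} (hc : 0 ≤ c)
    (hgreedy : ∀ t : Fin T, ∀ v ∈ parts t,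
      f (insert v (G t)) - f (G t) ≤ c * (f (G (t + 1)) - f (G t)))
    {S : Finset V} (hcover : ∀ v, ∃ t, v ∈ parts t) (hS : ∀ t, #(S ∩ parts t) ≤ 1) :
    f S ≤ f (G T) + c * (f (G T) - f (G 0)) := by
  set D : Fin T → ℝ := fun t ↦ f (G (t + 1)) - f (G t)
  have hD_nonneg (t : Fin T) : 0 ≤ D t := sub_nonneg.mpr (hmono _ _ (hstep t t.isLt))
  have hD_sum : ∑ t, D t = f (G T) - f (G 0) :=
    (Fin.sum_univ_eq_sum_range (fun n ↦ f (G (n + 1)) - f (G n)) T).trans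
      (sum_range_sub (fun n ↦ f (G n)) T)
  choose τ hτ using hcover
  have hτ_inj : Set.InjOn τ S := injOn_of_card_inter_le_one hτ hS
  have hmarg (v : V) : f (insert v (G T)) - f (G T) ≤ c * D (τ v) := by
    have hle : G (τ v) ⊆ G T := subset_of_le_of_forall_lt_subset_succ hstep (τ v).isLt.le
    have := hsub {v} (G T) (G (τ v)) hle
    rw [union_singleton, union_singleton] at this
    exact this.trans (hgreedy (τ v) v (hτ v))
  calc f S ≤ f (G T ∪ S) := hmono _ _ subset_union_right
    _ ≤ f (G T) + ∑ v ∈ S, (f (insert v (G T)) - f (G T)) := by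
      linarith [sub_le_sum_insert_sub_of_submodular hsub (G T) S]
    _ ≤ f (G T) + c * ∑ v ∈ S, D (τ v) := by
      rw [mul_sum]; gcongr with v; exact hmarg v
    _ = f (G T) + c * ∑ t ∈ S.image τ, D t := by rw [sum_image hτ_inj]
    _ ≤ f (G T) + c * ∑ t, D t := by
      gcongr
      · exact fun t _ _ ↦ hD_nonneg t
      · exact subset_univ _
    _ = f (G T) + c * (f (G T) - f (G 0)) := by rw [hD_sum]

end

theorem stmt_11_general {V : Type*} [DecidableEq V] (T : ℕ)
    (parts : Fin T → Finset V)
    (hcover : ∀ v : V, ∃ t, v ∈ parts t)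
    (f : Finset V → ℝ)
    (hmono : ∀ A B : Finset V, A ⊆ B → f A ≤ f B)
    (hsub : ∀ B A A' : Finset V, A' ⊆ A → f (A ∪ B) - f A ≤ f (A' ∪ B) - f A')
    (hf0 : f ∅ = 0)
    (Γ : ℝ) (hΓ : 1 ≤ Γ)
    (G : ℕ → Finset V) (g : Fin T → V)
    (hG0 : G 0 = ∅)
    (hGsucc : ∀ t : Fin T, G ((t : ℕ) + 1) = insert (g t) (G (t : ℕ)))
    (hgreedy : ∀ t : Fin T, ∀ v ∈ parts t,
      f (G ((t : ℕ) + 1)) - f (G (t : ℕ)) ≥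
        (1 / (3 * Γ)) * (f (insert v (G (t : ℕ))) - f (G (t : ℕ)))) :
    ∀ S : Finset V, (∀ t : Fin T, (S ∩ parts t).card ≤ 1) →
      f (G T) ≥ (1 / (3 * Γ + 1)) * f S := by
  intro S hS
  have hΓ_pos : 0 < 3 * Γ := by linarith
  have hstep (n : ℕ) (hn : n < T) : G n ⊆ G (n + 1) :=
    hGsucc ⟨n, hn⟩ ▸ subset_insert _ _
  have hgreedy' (t : Fin T) (v : V) (hv : v ∈ parts t) :
      f (insert v (G t)) - f (G t) ≤ 3 * Γ * (f (G (t + 1)) - f (G t)) := by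
    have hslot := hgreedy t v hv
    rwa [ge_iff_le, one_div, inv_mul_le_iff₀ hΓ_pos] at hslot
  have key := le_add_mul_sub_of_greedy parts hmono hsub hstep hΓ_pos.le hgreedy' hcover hS
  rw [hG0, hf0] at key
  rw [ge_iff_le, one_div, inv_mul_le_iff₀ (by linarith)]
  linarith

/-- Competitive ratio of GADGET (Theorem 4): a temporally greedy schedule using a
`1/(3Γ)`-approximation in each time slot attains at least a `1/(3Γ+1)` fraction of the
value of any feasible schedule (at most one element per part). -/
theorem stmt_11 {V : Type*} [Fintype V] [DecidableEq V] (T : ℕ)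
    (parts : Fin T → Finset V)
    (hne : ∀ t, (parts t).Nonempty)
    (hdisj : ∀ t t', t ≠ t' → Disjoint (parts t) (parts t'))
    (hcover : ∀ v : V, ∃ t, v ∈ parts t)
    (f : Finset V → ℝ)
    (hmono : ∀ A B : Finset V, A ⊆ B → f A ≤ f B)
    (hsub : ∀ B A A' : Finset V, A' ⊆ A → f (A ∪ B) - f A ≤ f (A' ∪ B) - f A')
    (hf0 : f ∅ = 0)
    (Γ : ℝ) (hΓ : 1 ≤ Γ)
    (G : ℕ → Finset V) (g : Fin T → V)
    (hG0 : G 0 = ∅)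
    (hg : ∀ t : Fin T, g t ∈ parts t)
    (hGsucc : ∀ t : Fin T, G ((t : ℕ) + 1) = insert (g t) (G (t : ℕ)))
    (hgreedy : ∀ t : Fin T, ∀ v ∈ parts t,
      f (G ((t : ℕ) + 1)) - f (G (t : ℕ)) ≥
        (1 / (3 * Γ)) * (f (insert v (G (t : ℕ))) - f (G (t : ℕ)))) :
    ∀ S : Finset V, (∀ t : Fin T, (S ∩ parts t).card ≤ 1) →
      f (G T) ≥ (1 / (3 * Γ + 1)) * f S :=
  stmt_11_general T parts hcover f hmono hsub hf0 Γ hΓ G g hG0 hGsucc hgreedy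
end
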